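/- arXiv:1708.05311 — 12 statements merged into one kernel-verified Lean document; each statement's English description precedes it below -/
import Mathlib

section
/- For all real numbers s > 0, σ > 0, I ≥ 0 and β > 1, one has log₂(1 + s/(I + σ)) < β·log₂(1 + s/(β·I + σ)). -/
/-- For all real numbers `s > 0`, `σ > 0`, `I ≥ 0` and `β > 1`,
`log₂(1 + s/(I + σ)) < β·log₂(1 + s/(β*I + σ))`. -/
theorem logb_capacity_scalable (s σ I β : ℝ)
    (hs : 0 < s) (hσ : 0 < σ) (hI : 0 ≤ I) (hβ : 1 < β) :
    Real.logb 2 (1 + s / (I + σ)) < β * Real.logb 2 (1 + s / (β * I + σ)) := by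
  have hβ0 : 0 < β := by linarith
  have hd1 : 0 < I + σ := by linarith
  have hd2 : 0 < β * I + σ := by positivity
  set x := s / (β * I + σ) with hxdef
  have hx : 0 < x := by positivity
  have h1 : 1 + s / (I + σ) ≤ 1 + β * x := by
    have : s / (I + σ) ≤ β * x := by
      rw [hxdef, mul_div_assoc', div_le_div_iff₀ hd1 hd2]
      nlinarith [mul_nonneg (mul_nonneg hs.le hσ.le) (by linarith : (0:ℝ) ≤ β - 1)]
    linarith
  have h2 : 1 + β * x < (1 + x) ^ β :=
    one_add_mul_self_lt_rpow_one_add (by linarith) hx.ne' hβ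
  have hpos : (0:ℝ) < 1 + s / (I + σ) := by positivity
  calc Real.logb 2 (1 + s / (I + σ))
      < Real.logb 2 ((1 + x) ^ β) :=
        Real.logb_lt_logb one_lt_two hpos (lt_of_le_of_lt h1 h2)
    _ = β * Real.logb 2 (1 + x) :=
        Real.logb_rpow_eq_mul_logb_of_pos (by linarith)
end

section
/- Let n ≥ 1 and m ≥ 1 be natural numbers. For each j ∈ {1,…,n} let K_j ⊆ {1,…,m}, and for each k ∈ {1,…,m} let J_k ⊆ {1,…,n}. Fix constants d_j > 0, c > 0, s_j > 0, σ > 0, and g_{kj} ≥ 0 for all k, j. For μ ∈ ℝ^n with μ ≥ 0 define f_j(μ) = d_j / ( c · log₂( 1 + s_j / ( Σ_{k∈K_j} g_{kj} · ( Σ_{l∈J_k} μ_l ) + σ ) ) ). Then f = (f_1,…,f_n) is a standard interference function on the nonnegative orthant: (i) f_j(μ) > 0 for every j and every μ ≥ 0; (ii) if 0 ≤ μ ≤ μ' componentwise then f_j(μ) ≤ f_j(μ') for every j; (iii) for every β > 1 and every μ ≥ 0, β·f_j(μ) > f_j(β·μ) for every j. -/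
section aux

private lemma Isum_nonneg {n m : ℕ} (K : Fin n → Finset (Fin m)) (J : Fin m → Finset (Fin n))
    (g : Fin m → Fin n → ℝ) (hg : ∀ k j, 0 ≤ g k j)
    (μ : Fin n → ℝ) (hμ : ∀ l, 0 ≤ μ l) (j : Fin n) :
    0 ≤ ∑ k ∈ K j, g k j * (∑ l ∈ J k, μ l) := by
  apply Finset.sum_nonneg
  intro k _
  exact mul_nonneg (hg k j) (Finset.sum_nonneg fun l _ => hμ l)

end aux

/-- The load-coupling resource function `f` of a C-RAN is a standard
interference function on the nonnegative orthant:
(i) positivity, (ii) monotonicity, (iii) scalability. -/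
theorem loadCoupling_isSIF (n m : ℕ) (hn : 1 ≤ n) (hm : 1 ≤ m)
    (K : Fin n → Finset (Fin m)) (J : Fin m → Finset (Fin n))
    (d : Fin n → ℝ) (hd : ∀ j, 0 < d j)
    (c : ℝ) (hc : 0 < c)
    (s : Fin n → ℝ) (hs : ∀ j, 0 < s j)
    (σ : ℝ) (hσ : 0 < σ)
    (g : Fin m → Fin n → ℝ) (hg : ∀ k j, 0 ≤ g k j)
    (f : (Fin n → ℝ) → Fin n → ℝ)
    (hf : ∀ (μ : Fin n → ℝ) (j : Fin n), f μ j =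
      d j / (c * Real.logb 2 (1 + s j /
        ((∑ k ∈ K j, g k j * (∑ l ∈ J k, μ l)) + σ)))) :
    (∀ μ : Fin n → ℝ, (∀ l, 0 ≤ μ l) → ∀ j, 0 < f μ j) ∧
    (∀ μ μ' : Fin n → ℝ, (∀ l, 0 ≤ μ l) → (∀ l, μ l ≤ μ' l) →
      ∀ j, f μ j ≤ f μ' j) ∧
    (∀ β : ℝ, 1 < β → ∀ μ : Fin n → ℝ, (∀ l, 0 ≤ μ l) →
      ∀ j, f (fun l => β * μ l) j < β * f μ j) := by
  -- basic facts
  have hL : ∀ (μ : Fin n → ℝ), (∀ l, 0 ≤ μ l) → ∀ j,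
      0 < Real.logb 2 (1 + s j /
        ((∑ k ∈ K j, g k j * (∑ l ∈ J k, μ l)) + σ)) := by
    intro μ hμ j
    have hI := Isum_nonneg K J g hg μ hμ j
    have hD : 0 < (∑ k ∈ K j, g k j * (∑ l ∈ J k, μ l)) + σ := by linarith
    have hx : 0 < s j / _ := div_pos (hs j) hD
    exact Real.logb_pos (by norm_num) (by linarith)
  refine ⟨?_, ?_, ?_⟩
  · intro μ hμ j
    rw [hf]
    exact div_pos (hd j) (mul_pos hc (hL μ hμ j))
  · intro μ μ' hμ hle j
    have hμ' : ∀ l, 0 ≤ μ' l := fun l => le_trans (hμ l) (hle l)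
    rw [hf, hf]
    have hI := Isum_nonneg K J g hg μ hμ j
    have hI' := Isum_nonneg K J g hg μ' hμ' j
    have hD : 0 < (∑ k ∈ K j, g k j * (∑ l ∈ J k, μ l)) + σ := by linarith
    have hD' : 0 < (∑ k ∈ K j, g k j * (∑ l ∈ J k, μ' l)) + σ := by linarith
    have hII : (∑ k ∈ K j, g k j * (∑ l ∈ J k, μ l))
        ≤ (∑ k ∈ K j, g k j * (∑ l ∈ J k, μ' l)) := by
      apply Finset.sum_le_sum
      intro k _
      exact mul_le_mul_of_nonneg_left
        (Finset.sum_le_sum fun l _ => hle l) (hg k j)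
    have hxx : s j / ((∑ k ∈ K j, g k j * (∑ l ∈ J k, μ' l)) + σ)
        ≤ s j / ((∑ k ∈ K j, g k j * (∑ l ∈ J k, μ l)) + σ) := by
      apply div_le_div_of_nonneg_left (hs j).le hD (by linarith)
    have hpos' : 0 < s j / ((∑ k ∈ K j, g k j * (∑ l ∈ J k, μ' l)) + σ) :=
      div_pos (hs j) hD'
    have hlogle : Real.logb 2 (1 + s j / ((∑ k ∈ K j, g k j * (∑ l ∈ J k, μ' l)) + σ))
        ≤ Real.logb 2 (1 + s j / ((∑ k ∈ K j, g k j * (∑ l ∈ J k, μ l)) + σ)) :=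
      Real.logb_le_logb_of_le (by norm_num) (by linarith) (by linarith)
    have h1 := hL μ' hμ' j
    exact div_le_div_of_nonneg_left (hd j).le (mul_pos hc h1)
      (mul_le_mul_of_nonneg_left hlogle hc.le)
  · intro β hβ μ hμ j
    rw [hf, hf]
    have hI := Isum_nonneg K J g hg μ hμ j
    have hD : 0 < (∑ k ∈ K j, g k j * (∑ l ∈ J k, μ l)) + σ := by linarith
    set I := ∑ k ∈ K j, g k j * (∑ l ∈ J k, μ l) with hIdef
    have hscale : (∑ k ∈ K j, g k j * (∑ l ∈ J k, β * μ l)) = β * I := by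
      rw [hIdef, Finset.mul_sum]
      apply Finset.sum_congr rfl
      intro k _
      rw [← Finset.mul_sum]
      ring
    rw [hscale]
    set x := s j / (I + σ) with hxdef
    have hx : 0 < x := div_pos (hs j) hD
    have hβ0 : 0 < β := lt_trans one_pos hβ
    have hDβ : 0 < β * I + σ := by positivity
    -- β*I + σ < β*(I+σ)
    have hlt : β * I + σ < β * (I + σ) := by nlinarith
    have hstep1 : s j / (β * (I + σ)) < s j / (β * I + σ) :=
      div_lt_div_of_pos_left (hs j) hDβ hlt
    have hxβ : s j / (β * (I + σ)) = x / β := by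
      rw [hxdef, div_div, mul_comm]
    have hxb : 0 < x / β := by positivity
    -- key: 1 + x < (1 + x/β)^β
    have hkey : 1 + x < (1 + x / β) ^ β := by
      have := one_add_mul_self_lt_rpow_one_add (s := x / β)
        (by linarith) (ne_of_gt hxb) hβ
      have hb : β * (x / β) = x := by field_simp
      rwa [hb] at this
    -- logb of rpow
    have hlog_rpow : Real.logb 2 ((1 + x / β) ^ β)
        = β * Real.logb 2 (1 + x / β) := by
      unfold Real.logb
      rw [Real.log_rpow (by linarith)]
      ring
    have hL1 : Real.logb 2 (1 + x) < β * Real.logb 2 (1 + x / β) := by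
      rw [← hlog_rpow]
      exact Real.logb_lt_logb (by norm_num) (by linarith) hkey
    have hL2 : Real.logb 2 (1 + x / β) < Real.logb 2 (1 + s j / (β * I + σ)) := by
      apply Real.logb_lt_logb (by norm_num) (by linarith)
      rw [← hxβ]; linarith
    have hLβpos : 0 < Real.logb 2 (1 + s j / (β * I + σ)) :=
      Real.logb_pos (by norm_num) (by nlinarith [div_pos (hs j) hDβ])
    have hLpos : 0 < Real.logb 2 (1 + x) :=
      Real.logb_pos (by norm_num) (by linarith)
    -- conclude
    have hmain : Real.logb 2 (1 + x) < β * Real.logb 2 (1 + s j / (β * I + σ)) := by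
      calc Real.logb 2 (1 + x) < β * Real.logb 2 (1 + x / β) := hL1
        _ < β * Real.logb 2 (1 + s j / (β * I + σ)) := by
            exact mul_lt_mul_of_pos_left hL2 hβ0
    rw [← mul_div_assoc, div_lt_div_iff₀ (mul_pos hc hLβpos) (mul_pos hc hLpos)]
    nlinarith [mul_lt_mul_of_pos_left hmain (mul_pos (hd j) hc)]
end

section
/- Let F be a standard interference function on the nonnegative orthant of ℝ^n. If μ ≥ 0 and ν ≥ 0 satisfy μ = F(μ) and ν = F(ν), then μ = ν; that is, a fixed point of an SIF, if it exists, is unique. -/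
/-- `F` is a standard interference function on the nonnegative orthant of `ℝ^n`:
(i) positivity, (ii) monotonicity, (iii) scalability. -/
def IsSIF {n : ℕ} (F : (Fin n → ℝ) → Fin n → ℝ) : Prop :=
  (∀ μ : Fin n → ℝ, (∀ j, 0 ≤ μ j) → ∀ j, 0 < F μ j) ∧
  (∀ μ μ' : Fin n → ℝ, (∀ j, 0 ≤ μ j) → (∀ j, μ j ≤ μ' j) →
    ∀ j, F μ j ≤ F μ' j) ∧
  (∀ β : ℝ, 1 < β → ∀ μ : Fin n → ℝ, (∀ j, 0 ≤ μ j) →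
    ∀ j, F (fun l => β * μ l) j < β * F μ j)

lemma sif_fixedPoint_le {n : ℕ} (F : (Fin n → ℝ) → Fin n → ℝ)
    (hF : IsSIF F) (μ ν : Fin n → ℝ)
    (hμ : ∀ j, 0 ≤ μ j) (hν : ∀ j, 0 ≤ ν j)
    (hfixμ : μ = F μ) (hfixν : ν = F ν) :
    ∀ j, μ j ≤ ν j := by
  obtain ⟨hpos, hmono, hscale⟩ := hF
  intro j
  by_contra h
  push_neg at h
  have hνpos : ∀ i, 0 < ν i := fun i => hfixν ▸ hpos ν hν i
  have hne : (Finset.univ : Finset (Fin n)).Nonempty := ⟨j, Finset.mem_univ j⟩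
  set β : ℝ := Finset.univ.sup' hne (fun i => μ i / ν i) with hβ
  have hβge : ∀ i, μ i / ν i ≤ β := fun i =>
    Finset.le_sup' (fun i => μ i / ν i) (Finset.mem_univ i)
  have hβ1 : 1 < β := lt_of_lt_of_le ((one_lt_div (hνpos j)).2 h) (hβge j)
  obtain ⟨j0, _, hj0⟩ := Finset.exists_mem_eq_sup' hne (fun i => μ i / ν i)
  have hle : ∀ i, μ i ≤ β * ν i := fun i =>
    (div_le_iff₀ (hνpos i)).1 (hβge i)
  have heq : μ j0 = β * ν j0 := by
    have hb : β = μ j0 / ν j0 := hj0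
    rw [hb, div_mul_cancel₀ _ (hνpos j0).ne']
  have h1 : F μ j0 ≤ F (fun l => β * ν l) j0 := hmono μ _ hμ hle j0
  have h2 : F (fun l => β * ν l) j0 < β * F ν j0 := hscale β hβ1 ν hν j0
  have h3 : β * F ν j0 = β * ν j0 := by rw [← hfixν]
  have : μ j0 < μ j0 := by
    calc μ j0 = F μ j0 := by rw [← hfixμ]
    _ ≤ F (fun l => β * ν l) j0 := h1
    _ < β * F ν j0 := h2
    _ = μ j0 := by rw [h3, ← heq]
  exact lt_irrefl _ this

/-- A fixed point of a standard interference function, if it exists, is unique. -/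
theorem sif_fixedPoint_unique {n : ℕ} (F : (Fin n → ℝ) → Fin n → ℝ)
    (hF : IsSIF F) (μ ν : Fin n → ℝ)
    (hμ : ∀ j, 0 ≤ μ j) (hν : ∀ j, 0 ≤ ν j)
    (hfixμ : μ = F μ) (hfixν : ν = F ν) :
    μ = ν := by
  funext j
  exact le_antisymm (sif_fixedPoint_le F hF μ ν hμ hν hfixμ hfixν j)
    (sif_fixedPoint_le F hF ν μ hν hμ hfixν hfixμ j)
end

section
/- Let F be a standard interference function on the nonnegative orthant of ℝ^n. If μ* ≥ 0 satisfies μ* = F(μ*), and μ ≥ 0 satisfies μ ≥ F(μ) componentwise, then μ ≥ μ* componentwise. -/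
/-- The fixed point of an SIF is the componentwise-minimal feasible point:
any `μ ≥ 0` with `μ ≥ F(μ)` dominates the fixed point `μ*`. -/
theorem sif_fixedPoint_minimal {n : ℕ} (F : (Fin n → ℝ) → Fin n → ℝ)
    (hF : IsSIF F) (μstar μ : Fin n → ℝ)
    (hμstar : ∀ j, 0 ≤ μstar j) (hμ : ∀ j, 0 ≤ μ j)
    (hfix : μstar = F μstar) (hfeas : ∀ j, F μ j ≤ μ j) :
    ∀ j, μstar j ≤ μ j := by
  obtain ⟨hpos, hmono, hscale⟩ := hF
  have hμpos : ∀ j, 0 < μ j := fun j => lt_of_lt_of_le (hpos μ hμ j) (hfeas j)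
  intro j
  by_contra hcon
  push_neg at hcon
  have hne : (Finset.univ : Finset (Fin n)).Nonempty := ⟨j, Finset.mem_univ j⟩
  set β := Finset.univ.sup' hne (fun i => μstar i / μ i) with hβ
  have hβ1 : 1 < β := by
    have h1 : 1 < μstar j / μ j := (one_lt_div (hμpos j)).2 hcon
    exact lt_of_lt_of_le h1 (Finset.le_sup' (f := fun i => μstar i / μ i) (Finset.mem_univ j))
  have hle : ∀ i, μstar i ≤ β * μ i := by
    intro i
    have : μstar i / μ i ≤ β := Finset.le_sup' (f := fun i => μstar i / μ i) (Finset.mem_univ i)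
    calc μstar i = (μstar i / μ i) * μ i := by
          rw [div_mul_cancel₀ _ (hμpos i).ne']
      _ ≤ β * μ i := by
          exact mul_le_mul_of_nonneg_right this (hμpos i).le
  have hlt : ∀ i, μstar i < β * μ i := by
    intro i
    calc μstar i = F μstar i := congrFun hfix i
      _ ≤ F (fun l => β * μ l) i := hmono μstar _ hμstar hle i
      _ < β * F μ i := hscale β hβ1 μ hμ i
      _ ≤ β * μ i := mul_le_mul_of_nonneg_left (hfeas i) (by linarith)
  obtain ⟨k, _, hk⟩ := Finset.exists_mem_eq_sup' hne (fun i => μstar i / μ i)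
  have : μstar k = β * μ k := by
    have : β = μstar k / μ k := hk
    rw [this, div_mul_cancel₀ _ (hμpos k).ne']
  exact absurd this (ne_of_lt (hlt k))
end

section
/- Let f be a standard interference function on the nonnegative orthant of ℝ^n and let S ⊆ {1,…,n}. Suppose (α*, μ*) is feasible and optimal, i.e., α ≤ α* for every feasible pair (α, μ). Then H(μ*) = 1 and there exists j ∈ S with μ*_j = α*·f_j(μ*). -/
open Filter Topology

theorem Finset.exists_gt_forall_mul_lt {κ : Type*} (s : Finset κ) {a b : κ → ℝ} {α : ℝ}
    (h : ∀ j ∈ s, α * b j < a j) : ∃ α' > α, ∀ j ∈ s, α' * b j < a j := by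
  have hnear : ∀ᶠ x in 𝓝[>] α, ∀ j ∈ s, x * b j < a j :=
    (s.eventually_all).2 fun j hj => nhdsWithin_le_nhds <|
      ((continuous_id.mul continuous_const).tendsto α).eventually (gt_mem_nhds (h j hj))
  obtain ⟨x, hx, hgt⟩ := (hnear.and self_mem_nhdsWithin).exists
  exact ⟨x, hgt, hx⟩

theorem IsSIF.pos {n : ℕ} {f : (Fin n → ℝ) → Fin n → ℝ} (hf : IsSIF f) {μ : Fin n → ℝ}
    (hμ : ∀ j, 0 ≤ μ j) (j : Fin n) : 0 < f μ j :=
  hf.1 μ hμ j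

theorem IsSIF.map_smul_lt {n : ℕ} {f : (Fin n → ℝ) → Fin n → ℝ} (hf : IsSIF f) {β : ℝ}
    (hβ : 1 < β) {μ : Fin n → ℝ} (hμ : ∀ j, 0 ≤ μ j) (j : Fin n) : f (β • μ) j < β * f μ j :=
  hf.2.2 β hβ μ hμ j

def DemandFeasible {n : ℕ} {ι : Type*} (f : (Fin n → ℝ) → Fin n → ℝ) (S : Finset (Fin n))
    (J : ι → Finset (Fin n)) (ρbar α : ℝ) (μ : Fin n → ℝ) : Prop :=
  1 ≤ α ∧ (∀ j, 0 ≤ μ j) ∧ (∀ j ∈ S, α * f μ j ≤ μ j) ∧ (∀ j ∉ S, f μ j ≤ μ j) ∧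
    (∀ i, ∑ j ∈ J i, μ j ≤ ρbar)

namespace DemandFeasible

variable {n : ℕ} {ι : Type*} {f : (Fin n → ℝ) → Fin n → ℝ} {S : Finset (Fin n)}
  {J : ι → Finset (Fin n)} {ρbar α : ℝ} {μ : Fin n → ℝ}

theorem pos (hf : IsSIF f) (h : DemandFeasible f S J ρbar α μ) (j : Fin n) : 0 < μ j := by
  obtain ⟨hα, hμ, hS, hSc, -⟩ := h
  have hfj := hf.pos hμ j
  by_cases hj : j ∈ S
  · nlinarith [hS j hj]
  · exact hfj.trans_le (hSc j hj)

theorem exists_gt (h : DemandFeasible f S J ρbar α μ) (hstrict : ∀ j ∈ S, α * f μ j < μ j) :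
    ∃ α' > α, DemandFeasible f S J ρbar α' μ := by
  obtain ⟨hα, hμ, -, hSc, hload⟩ := h
  obtain ⟨α', hα', hS'⟩ := S.exists_gt_forall_mul_lt hstrict
  exact ⟨α', hα', by linarith, hμ, fun j hj => (hS' j hj).le, hSc, hload⟩

theorem smul (hf : IsSIF f) (h : DemandFeasible f S J ρbar α μ) {β : ℝ} (hβ : 1 < β)
    (hload : ∀ i, β * ∑ j ∈ J i, μ j ≤ ρbar) :
    DemandFeasible f S J ρbar α (β • μ) ∧ ∀ j ∈ S, α * f (β • μ) j < (β • μ) j := by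
  obtain ⟨hα, hμ, hS, hSc, -⟩ := h
  have hscal := hf.map_smul_lt hβ hμ
  have hstrict : ∀ j ∈ S, α * f (β • μ) j < (β • μ) j := fun j hj => by
    have hSj := hS j hj
    simp only [Pi.smul_apply, smul_eq_mul]
    nlinarith [hscal j]
  refine ⟨⟨hα, fun j => ?_, fun j hj => (hstrict j hj).le, fun j hj => ?_, fun i => ?_⟩, hstrict⟩
  · simpa using mul_nonneg (by linarith) (hμ j)
  · simp only [Pi.smul_apply, smul_eq_mul]
    nlinarith [hscal j, hSc j hj]
  · simpa [Finset.mul_sum] using hload i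

theorem exists_tight_of_optimal (h : DemandFeasible f S J ρbar α μ)
    (hopt : ∀ α' μ', DemandFeasible f S J ρbar α' μ' → α' ≤ α) :
    ∃ j ∈ S, μ j = α * f μ j := by
  by_contra! hslack
  have hS : ∀ j ∈ S, α * f μ j ≤ μ j := h.2.2.1
  obtain ⟨α', hα', h'⟩ := h.exists_gt fun j hj => (hS j hj).lt_of_ne (hslack j hj).symm
  exact (hopt α' μ h').not_gt hα'

theorem iSup_load_eq_of_optimal [Finite ι] (hf : IsSIF f) (hcover : ∀ j, ∃ i, j ∈ J i)
    (h : DemandFeasible f S J ρbar α μ)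
    (hopt : ∀ α' μ', DemandFeasible f S J ρbar α' μ' → α' ≤ α) :
    ⨆ i, ∑ j ∈ J i, μ j = ρbar := by
  set T := ⨆ i, ∑ j ∈ J i, μ j
  obtain ⟨j₀, -, -⟩ := h.exists_tight_of_optimal hopt
  obtain ⟨i₀, hi₀⟩ := hcover j₀
  have : Nonempty ι := ⟨i₀⟩
  have hle : ∀ i, ∑ j ∈ J i, μ j ≤ T := le_ciSup (Set.finite_range _).bddAbove
  have hT : 0 < T := calc
    0 < μ j₀ := h.pos hf j₀
    _ ≤ ∑ j ∈ J i₀, μ j := Finset.single_le_sum (fun j _ => (h.pos hf j).le) hi₀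
    _ ≤ T := hle i₀
  refine (ciSup_le h.2.2.2.2).antisymm (not_lt.1 fun hlt => ?_)
  have hβ : 1 < ρbar / T := (one_lt_div hT).2 hlt
  obtain ⟨hβμ, hstrict⟩ := h.smul hf hβ fun i =>
    (mul_le_mul_of_nonneg_left (hle i) (by positivity)).trans_eq (div_mul_cancel₀ _ hT.ne')
  obtain ⟨α', hα', h'⟩ := hβμ.exists_gt hstrict
  exact (hopt α' _ h').not_gt hα'

end DemandFeasible

theorem maxD_necessary_condition_general (n m : ℕ)
    (J : Fin m → Finset (Fin n)) (hcover : ∀ j : Fin n, ∃ i : Fin m, j ∈ J i)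
    (ρbar : ℝ) (hρ : 0 < ρbar)
    (S : Finset (Fin n))
    (f : (Fin n → ℝ) → Fin n → ℝ) (hf : IsSIF f)
    (H : (Fin n → ℝ) → ℝ)
    (hH : ∀ μ : Fin n → ℝ, H μ = (1 / ρbar) * ⨆ i : Fin m, ∑ j ∈ J i, μ j)
    (Feasible : ℝ → (Fin n → ℝ) → Prop)
    (hFeas : ∀ (α : ℝ) (μ : Fin n → ℝ), Feasible α μ ↔
      1 ≤ α ∧ (∀ j, 0 ≤ μ j) ∧
      (∀ j ∈ S, α * f μ j ≤ μ j) ∧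
      (∀ j ∉ S, f μ j ≤ μ j) ∧
      (∀ i : Fin m, ∑ j ∈ J i, μ j ≤ ρbar))
    (αstar : ℝ) (μstar : Fin n → ℝ)
    (hfeas : Feasible αstar μstar)
    (hopt : ∀ (α : ℝ) (μ : Fin n → ℝ), Feasible α μ → α ≤ αstar) :
    H μstar = 1 ∧ ∃ j ∈ S, μstar j = αstar * f μstar j := by
  obtain rfl : Feasible = DemandFeasible f S J ρbar := funext₂ fun α μ => propext (hFeas α μ)
  refine ⟨?_, hfeas.exists_tight_of_optimal hopt⟩
  rw [hH, hfeas.iSup_load_eq_of_optimal hf hcover hopt, one_div_mul_cancel hρ.ne']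

/-- Necessary optimality condition for user-centric demand scaling:
at an optimum `(α*, μ*)` the normalized maximum load equals one,
and some scaling constraint in `S` is tight. -/
theorem maxD_necessary_condition (n m : ℕ) (hn : 0 < n) (hm : 0 < m)
    (J : Fin m → Finset (Fin n)) (hcover : ∀ j : Fin n, ∃ i : Fin m, j ∈ J i)
    (ρbar : ℝ) (hρ : 0 < ρbar)
    (S : Finset (Fin n))
    (f : (Fin n → ℝ) → Fin n → ℝ) (hf : IsSIF f)
    (H : (Fin n → ℝ) → ℝ)
    (hH : ∀ μ : Fin n → ℝ, H μ = (1 / ρbar) * ⨆ i : Fin m, ∑ j ∈ J i, μ j)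
    (Feasible : ℝ → (Fin n → ℝ) → Prop)
    (hFeas : ∀ (α : ℝ) (μ : Fin n → ℝ), Feasible α μ ↔
      1 ≤ α ∧ (∀ j, 0 ≤ μ j) ∧
      (∀ j ∈ S, α * f μ j ≤ μ j) ∧
      (∀ j ∉ S, f μ j ≤ μ j) ∧
      (∀ i : Fin m, ∑ j ∈ J i, μ j ≤ ρbar))
    (αstar : ℝ) (μstar : Fin n → ℝ)
    (hfeas : Feasible αstar μstar)
    (hopt : ∀ (α : ℝ) (μ : Fin n → ℝ), Feasible α μ → α ≤ αstar) :
    H μstar = 1 ∧ ∃ j ∈ S, μstar j = αstar * f μstar j :=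
  maxD_necessary_condition_general n m J hcover ρbar hρ S f hf H hH Feasible hFeas αstar μstar hfeas
    hopt
end

section
/- Let f be a standard interference function on the nonnegative orthant of ℝ^n that is additionally strictly monotone, and let S ⊆ {1,…,n} be nonempty. Suppose α* ≥ 1 and μ* ≥ 0 satisfy μ*_j = α*·f_j(μ*) for all j ∈ S, μ*_j = f_j(μ*) for all j ∈ {1,…,n}\S, and H(μ*) = 1. Then (α*, μ*) is feasible and α ≤ α* for every feasible pair (α, μ); i.e., (α*, μ*) is optimal. -/
/-- Sufficient optimality condition for user-centric demand scaling:
if all resource constraints hold with equality and the normalized maximum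
load equals one, then `(α*, μ*)` is feasible and optimal. -/
theorem maxD_sufficient_condition (n m : ℕ) (hn : 0 < n) (hm : 0 < m)
    (J : Fin m → Finset (Fin n)) (hcover : ∀ j : Fin n, ∃ i : Fin m, j ∈ J i)
    (ρbar : ℝ) (hρ : 0 < ρbar)
    (S : Finset (Fin n)) (hS : S.Nonempty)
    (f : (Fin n → ℝ) → Fin n → ℝ) (hf : IsSIF f)
    (hstrict : ∀ μ μ' : Fin n → ℝ, (∀ j, 0 ≤ μ j) → (∀ j, μ j ≤ μ' j) →
      μ ≠ μ' → ∀ j, f μ j < f μ' j)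
    (H : (Fin n → ℝ) → ℝ)
    (hH : ∀ μ : Fin n → ℝ, H μ = (1 / ρbar) * ⨆ i : Fin m, ∑ j ∈ J i, μ j)
    (Feasible : ℝ → (Fin n → ℝ) → Prop)
    (hFeas : ∀ (α : ℝ) (μ : Fin n → ℝ), Feasible α μ ↔
      1 ≤ α ∧ (∀ j, 0 ≤ μ j) ∧
      (∀ j ∈ S, α * f μ j ≤ μ j) ∧
      (∀ j ∉ S, f μ j ≤ μ j) ∧
      (∀ i : Fin m, ∑ j ∈ J i, μ j ≤ ρbar))
    (αstar : ℝ) (hαstar : 1 ≤ αstar)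
    (μstar : Fin n → ℝ) (hμstar : ∀ j, 0 ≤ μstar j)
    (heqS : ∀ j ∈ S, μstar j = αstar * f μstar j)
    (heqSc : ∀ j ∉ S, μstar j = f μstar j)
    (hHone : H μstar = 1) :
    Feasible αstar μstar ∧
      ∀ (α : ℝ) (μ : Fin n → ℝ), Feasible α μ → α ≤ αstar := by
  obtain ⟨hpos, hmono, hscale⟩ := hf
  haveI : Nonempty (Fin m) := ⟨⟨0, hm⟩⟩
  haveI : Nonempty (Fin n) := ⟨⟨0, hn⟩⟩
  have hsup : (⨆ i : Fin m, ∑ j ∈ J i, μstar j) = ρbar := by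
    have h1 := hHone
    rw [hH] at h1
    field_simp at h1
    linarith
  have hbdd : BddAbove (Set.range fun i : Fin m => ∑ j ∈ J i, μstar j) :=
    Set.Finite.bddAbove (Set.finite_range _)
  have hle : ∀ i, ∑ j ∈ J i, μstar j ≤ ρbar := fun i => hsup ▸ le_ciSup hbdd i
  have hfpos : ∀ j, 0 < f μstar j := hpos _ hμstar
  have hμpos : ∀ j, 0 < μstar j := by
    intro j
    by_cases hj : j ∈ S
    · rw [heqS j hj]; nlinarith [hfpos j]
    · rw [heqSc j hj]; exact hfpos j
  have feas : Feasible αstar μstar := by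
    rw [hFeas]
    refine ⟨hαstar, hμstar, ?_, ?_, hle⟩
    · intro j hj; rw [heqS j hj]
    · intro j hj; rw [heqSc j hj]
  refine ⟨feas, ?_⟩
  intro α μ hfm
  rw [hFeas] at hfm
  obtain ⟨hα1, hμ0, hfS, hfSc, hload⟩ := hfm
  by_contra hlt
  push_neg at hlt
  have hfμpos : ∀ j, 0 < f μ j := hpos _ hμ0
  have hμp : ∀ j, 0 < μ j := by
    intro j
    by_cases hj : j ∈ S
    · have := hfS j hj; nlinarith [hfμpos j]
    · linarith [hfSc j hj, hfμpos j]
  obtain ⟨j0, -, hj0⟩ := Finset.exists_min_image Finset.univ (fun j => μ j / μstar j)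
    ⟨⟨0, hn⟩, Finset.mem_univ _⟩
  set β := μ j0 / μstar j0 with hβdef
  have hβpos : 0 < β := div_pos (hμp j0) (hμpos j0)
  have hβle : ∀ j, β * μstar j ≤ μ j := by
    intro j
    have h := hj0 j (Finset.mem_univ j)
    exact (le_div_iff₀ (hμpos j)).mp h
  have hμj0 : μ j0 = β * μstar j0 := by
    rw [hβdef, div_mul_cancel₀ _ (ne_of_gt (hμpos j0))]
  rcases lt_or_ge β 1 with hβ1 | hβ1
  · -- case β < 1 : contradiction at j0
    have hν0 : ∀ l, 0 ≤ β * μstar l := fun l => mul_nonneg hβpos.le (hμstar l)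
    have hmono1 : f (fun l => β * μstar l) j0 ≤ f μ j0 := hmono _ _ hν0 hβle j0
    have hβinv : 1 < 1 / β := one_lt_one_div hβpos hβ1
    have hsc := hscale (1 / β) hβinv (fun l => β * μstar l) hν0 j0
    have hrw : (fun l => (1 / β) * (β * μstar l)) = μstar := by
      funext l; field_simp
    rw [hrw] at hsc
    have h2 : β * f μstar j0 < f (fun l => β * μstar l) j0 := by
      have h3 := mul_lt_mul_of_pos_left hsc hβpos
      rw [show β * (1 / β * f (fun l => β * μstar l) j0)
          = f (fun l => β * μstar l) j0 by field_simp] at h3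
      exact h3
    by_cases hj : j0 ∈ S
    · have ha := hfS j0 hj
      have he := heqS j0 hj
      nlinarith [hfpos j0, hfμpos j0, mul_le_mul_of_nonneg_left hmono1 (by linarith : (0:ℝ) ≤ α),
        mul_lt_mul_of_pos_left h2 (by linarith : (0:ℝ) < α)]
    · have ha := hfSc j0 hj
      have he := heqSc j0 hj
      nlinarith
  · -- case 1 ≤ β : μ dominates μstar, strict everywhere, load violated
    have hge' : ∀ j, μstar j ≤ μ j := by
      intro j
      have : μstar j ≤ β * μstar j := by nlinarith [hμpos j]
      linarith [hβle j]
    have hmono2 : ∀ j, f μstar j ≤ f μ j := hmono _ _ hμstar hge'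
    obtain ⟨s, hs⟩ := hS
    have hslt : μstar s < μ s := by
      have ha := hfS s hs
      have he := heqS s hs
      nlinarith [hfpos s, hmono2 s]
    have hne : μstar ≠ μ := by
      intro h; rw [h] at hslt; exact lt_irrefl _ hslt
    have hstrictall := hstrict μstar μ hμstar hge' hne
    have hall : ∀ j, μstar j < μ j := by
      intro j
      by_cases hj : j ∈ S
      · have ha := hfS j hj
        have he := heqS j hj
        nlinarith [hstrictall j, hfpos j, hfμpos j]
      · have ha := hfSc j hj
        have he := heqSc j hj
        linarith [hstrictall j]
    obtain ⟨i0, hi0⟩ := Finite.exists_max (fun i : Fin m => ∑ j ∈ J i, μstar j)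
    have hsum0 : ∑ j ∈ J i0, μstar j = ρbar := by
      refine le_antisymm (hle i0) ?_
      rw [← hsup]
      exact ciSup_le hi0
    have hJne : (J i0).Nonempty := by
      apply Finset.nonempty_of_sum_ne_zero (f := μstar)
      rw [hsum0]; exact ne_of_gt hρ
    have hlt2 : ∑ j ∈ J i0, μstar j < ∑ j ∈ J i0, μ j :=
      Finset.sum_lt_sum_of_nonempty hJne (fun j _ => hall j)
    linarith [hload i0, hsum0]
end

section
/- Let f be a standard interference function on the nonnegative orthant of ℝ^n that is additionally strictly monotone, and let S ⊆ {1,…,n} be nonempty. Suppose α* ≥ 1 and μ* ≥ 0 satisfy the fixed-point relations α* = 1 / H(F_{α*}(μ*)) and μ* = F_{α*}(μ*) / H(F_{α*}(μ*)) (equivalently, μ* = α*·F_{α*}(μ*) componentwise with H(μ*) = 1). Then (α*, μ*) is feasible and α ≤ α* for every feasible pair (α, μ); i.e., the limit of the joint iteration is an optimal solution of the demand-scaling problem. -/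
/-- The limit of the joint iteration (a fixed point of
`α = 1/H(F_α(μ))`, `μ = F_α(μ)/H(F_α(μ))`) is an optimal solution
of the demand-scaling problem. -/
theorem iteration_limit_optimal (n m : ℕ) (hn : 0 < n) (hm : 0 < m)
    (J : Fin m → Finset (Fin n)) (hcover : ∀ j : Fin n, ∃ i : Fin m, j ∈ J i)
    (ρbar : ℝ) (hρ : 0 < ρbar)
    (S : Finset (Fin n)) (hS : S.Nonempty)
    (f : (Fin n → ℝ) → Fin n → ℝ) (hf : IsSIF f)
    (hstrict : ∀ μ μ' : Fin n → ℝ, (∀ j, 0 ≤ μ j) → (∀ j, μ j ≤ μ' j) →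
      μ ≠ μ' → ∀ j, f μ j < f μ' j)
    (H : (Fin n → ℝ) → ℝ)
    (hH : ∀ μ : Fin n → ℝ, H μ = (1 / ρbar) * ⨆ i : Fin m, ∑ j ∈ J i, μ j)
    (Fa : ℝ → (Fin n → ℝ) → Fin n → ℝ)
    (hFa : ∀ (a : ℝ) (μ : Fin n → ℝ) (j : Fin n),
      Fa a μ j = f μ j / (if j ∈ S then (1 : ℝ) else a))
    (Feasible : ℝ → (Fin n → ℝ) → Prop)
    (hFeas : ∀ (α : ℝ) (μ : Fin n → ℝ), Feasible α μ ↔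
      1 ≤ α ∧ (∀ j, 0 ≤ μ j) ∧
      (∀ j ∈ S, α * f μ j ≤ μ j) ∧
      (∀ j ∉ S, f μ j ≤ μ j) ∧
      (∀ i : Fin m, ∑ j ∈ J i, μ j ≤ ρbar))
    (αstar : ℝ) (hαstar : 1 ≤ αstar)
    (μstar : Fin n → ℝ) (hμstar : ∀ j, 0 ≤ μstar j)
    (hfix1 : αstar = 1 / H (Fa αstar μstar))
    (hfix2 : ∀ j : Fin n,
      μstar j = Fa αstar μstar j / H (Fa αstar μstar)) :
    Feasible αstar μstar ∧
      ∀ (α : ℝ) (μ : Fin n → ℝ), Feasible α μ → α ≤ αstar := by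
  haveI : Nonempty (Fin m) := ⟨⟨0, hm⟩⟩
  haveI : Nonempty (Fin n) := ⟨⟨0, hn⟩⟩
  have hαpos : 0 < αstar := lt_of_lt_of_le one_pos hαstar
  have hfpos : ∀ j, 0 < f μstar j := hf.1 μstar hμstar
  -- H at the fixed point equals 1/αstar
  have hHne : H (Fa αstar μstar) ≠ 0 := by
    intro h0
    rw [h0] at hfix1
    simp at hfix1
    linarith
  have hh0 : H (Fa αstar μstar) = 1 / αstar := by
    field_simp at hfix1 ⊢
    linarith [hfix1]
  have hmu : ∀ j, μstar j = αstar * Fa αstar μstar j := by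
    intro j
    rw [hfix2 j, hh0]
    field_simp
  have hmuS : ∀ j ∈ S, μstar j = αstar * f μstar j := by
    intro j hj
    rw [hmu j, hFa, if_pos hj, div_one]
  have hmuNS : ∀ j ∉ S, μstar j = f μstar j := by
    intro j hj
    rw [hmu j, hFa, if_neg hj, mul_div_cancel₀ _ hαpos.ne']
  -- the supremum of RRH sums of Fa
  have hbdd : BddAbove (Set.range fun i : Fin m => ∑ j ∈ J i, Fa αstar μstar j) :=
    Set.Finite.bddAbove (Set.finite_range _)
  have hsup : (⨆ i : Fin m, ∑ j ∈ J i, Fa αstar μstar j) = ρbar / αstar := by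
    have h1 := hH (Fa αstar μstar)
    rw [hh0] at h1
    field_simp at h1 ⊢
    linarith [h1]
  have hsumμ : ∀ i, ∑ j ∈ J i, μstar j = αstar * ∑ j ∈ J i, Fa αstar μstar j := by
    intro i
    rw [Finset.mul_sum]
    exact Finset.sum_congr rfl fun j _ => hmu j
  have hload : ∀ i, ∑ j ∈ J i, μstar j ≤ ρbar := by
    intro i
    have h1 : ∑ j ∈ J i, Fa αstar μstar j ≤ ρbar / αstar := by
      rw [← hsup]; exact le_ciSup hbdd i
    rw [hsumμ i]
    calc αstar * ∑ j ∈ J i, Fa αstar μstar j ≤ αstar * (ρbar / αstar) := by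
          exact mul_le_mul_of_nonneg_left h1 hαpos.le
      _ = ρbar := by field_simp
  -- some RRH attains the maximum load ρbar
  obtain ⟨i0, hi0⟩ := exists_eq_ciSup_of_finite
    (f := fun i : Fin m => ∑ j ∈ J i, Fa αstar μstar j)
  have hρbar0 : ∑ j ∈ J i0, μstar j = ρbar := by
    rw [hsumμ i0, hi0, hsup]
    field_simp
  constructor
  · rw [hFeas]
    exact ⟨hαstar, hμstar, fun j hj => (hmuS j hj).ge, fun j hj => (hmuNS j hj).ge, hload⟩
  · intro α μ hfeas
    rw [hFeas] at hfeas
    obtain ⟨hα1, hμ0, hSle, hNSle, hloadμ⟩ := hfeas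
    by_contra hc
    push_neg at hc
    have hfμpos : ∀ j, 0 < f μ j := hf.1 μ hμ0
    have hμpos : ∀ j, 0 < μ j := by
      intro j
      by_cases hj : j ∈ S
      · have := hSle j hj
        nlinarith [hfμpos j]
      · exact lt_of_lt_of_le (hfμpos j) (hNSle j hj)
    set β : ℝ := Finset.univ.sup' Finset.univ_nonempty (fun j => μstar j / μ j) with hβdef
    obtain ⟨j0, -, hj0⟩ := Finset.exists_mem_eq_sup' Finset.univ_nonempty
      (fun j => μstar j / μ j)
    have hβle : ∀ j, μstar j ≤ β * μ j := by
      intro j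
      have h1 : μstar j / μ j ≤ β := by
        rw [hβdef]
        exact Finset.le_sup' (fun j => μstar j / μ j) (Finset.mem_univ j)
      calc μstar j = (μstar j / μ j) * μ j := by
            rw [div_mul_cancel₀ _ (hμpos j).ne']
        _ ≤ β * μ j := mul_le_mul_of_nonneg_right h1 (hμpos j).le
    have hβj0 : μstar j0 = β * μ j0 := by
      rw [hβdef, hj0, div_mul_cancel₀ _ (hμpos j0).ne']
    by_cases hβ : β ≤ 1
    · -- then μstar ≤ μ
      have hle : ∀ j, μstar j ≤ μ j := by
        intro j
        calc μstar j ≤ β * μ j := hβle j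
          _ ≤ 1 * μ j := mul_le_mul_of_nonneg_right hβ (hμpos j).le
          _ = μ j := one_mul _
      by_cases heq : μstar = μ
      · obtain ⟨j1, hj1⟩ := hS
        have h1 : α * f μ j1 ≤ μ j1 := hSle j1 hj1
        have h2 : μstar j1 = αstar * f μstar j1 := hmuS j1 hj1
        rw [heq] at h2
        nlinarith [hfμpos j1]
      · have hst : ∀ j, f μstar j < f μ j := hstrict μstar μ hμstar hle heq
        -- sums over J i0 are equal, hence terms are equal
        have hsle : ∑ j ∈ J i0, μstar j ≤ ∑ j ∈ J i0, μ j :=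
          Finset.sum_le_sum fun j _ => hle j
        have hseq : ∑ j ∈ J i0, μstar j = ∑ j ∈ J i0, μ j :=
          le_antisymm hsle (by rw [hρbar0]; exact hloadμ i0)
        have hterm : ∀ j ∈ J i0, μstar j = μ j :=
          (Finset.sum_eq_sum_iff_of_le fun j _ => hle j).mp hseq
        have hJne : (J i0).Nonempty := by
          rcases Finset.eq_empty_or_nonempty (J i0) with h | h
          · rw [h] at hρbar0; simp at hρbar0; linarith
          · exact h
        obtain ⟨j1, hj1⟩ := hJne
        have hjeq := hterm j1 hj1
        by_cases hj1S : j1 ∈ S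
        · have h1 := hmuS j1 hj1S
          have h2 := hSle j1 hj1S
          nlinarith [hst j1, hfμpos j1, hfpos j1]
        · have h1 := hmuNS j1 hj1S
          have h2 := hNSle j1 hj1S
          linarith [hst j1]
    · push_neg at hβ
      have hβpos : (0:ℝ) < β := lt_trans one_pos hβ
      have hmono : ∀ j, f μstar j ≤ f (fun l => β * μ l) j :=
        hf.2.1 μstar _ hμstar fun j => hβle j
      have hscal : ∀ j, f (fun l => β * μ l) j < β * f μ j := hf.2.2 β hβ μ hμ0
      have hkey : ∀ j, f μstar j < β * f μ j := fun j =>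
        lt_of_le_of_lt (hmono j) (hscal j)
      by_cases hj0S : j0 ∈ S
      · have h1 := hmuS j0 hj0S
        have h2 := hSle j0 hj0S
        nlinarith [hkey j0, hfμpos j0, hβj0, hβpos, hαpos,
          mul_le_mul_of_nonneg_left h2 hβpos.le,
          mul_lt_mul_of_pos_left (hkey j0) hαpos,
          mul_pos hβpos (hfμpos j0)]
      · have h1 := hmuNS j0 hj0S
        have h2 := hNSle j0 hj0S
        nlinarith [hkey j0, hβj0, hβpos,
          mul_le_mul_of_nonneg_left h2 hβpos.le]
end

section
/- Let F be a standard interference function on the nonnegative orthant of ℝ^n. If μ ≥ 0, ν ≥ 0 and λ > 0, λ' > 0 satisfy F(μ) = λ·μ, F(ν) = λ'·ν, and H(μ) = H(ν) = 1, then λ = λ' and μ = ν; i.e., the eigenvalue of an SIF and its H-normalized eigenvector are unique. -/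
/-- If both sups equal ρbar, μ cannot be strictly below ν componentwise. -/
lemma sif_aux_not_lt {n m : ℕ} (hm : 0 < m) (J : Fin m → Finset (Fin n))
    (ρbar : ℝ) (hρ : 0 < ρbar) (μ ν : Fin n → ℝ)
    (hlt : ∀ j, μ j < ν j)
    (h1 : (⨆ i : Fin m, ∑ j ∈ J i, μ j) = ρbar)
    (h2 : (⨆ i : Fin m, ∑ j ∈ J i, ν j) = ρbar) : False := by
  have : Nonempty (Fin m) := ⟨⟨0, hm⟩⟩
  obtain ⟨i0, hi0⟩ := Finite.exists_max (fun i : Fin m => ∑ j ∈ J i, μ j)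
  have hsup : (⨆ i : Fin m, ∑ j ∈ J i, μ j) = ∑ j ∈ J i0, μ j :=
    le_antisymm (ciSup_le hi0) (le_ciSup (f := fun i : Fin m => ∑ j ∈ J i, μ j) (Finite.bddAbove_range _) i0)
  have hμsum : ∑ j ∈ J i0, μ j = ρbar := by rw [← hsup, h1]
  have hne : (J i0).Nonempty := by
    by_contra h
    rw [Finset.not_nonempty_iff_eq_empty] at h
    rw [h, Finset.sum_empty] at hμsum
    linarith
  have hlt2 : ∑ j ∈ J i0, μ j < ∑ j ∈ J i0, ν j :=
    Finset.sum_lt_sum_of_nonempty hne (fun j _ => hlt j)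
  have hle : ∑ j ∈ J i0, ν j ≤ ρbar := by
    rw [← h2]; exact le_ciSup (f := fun i : Fin m => ∑ j ∈ J i, ν j) (Finite.bddAbove_range _) i0
  linarith

lemma sif_aux_key {n m : ℕ} (hn : 0 < n) (hm : 0 < m)
    (J : Fin m → Finset (Fin n)) (ρbar : ℝ) (hρ : 0 < ρbar)
    (F : (Fin n → ℝ) → Fin n → ℝ) (hF : IsSIF F)
    (μ ν : Fin n → ℝ) (hμ : ∀ j, 0 ≤ μ j) (hν : ∀ j, 0 ≤ ν j)
    (hμp : ∀ j, 0 < μ j) (hνp : ∀ j, 0 < ν j)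
    (lam lam' : ℝ) (hlam : 0 < lam) (hlam' : 0 < lam')
    (heigμ : ∀ j, F μ j = lam * μ j)
    (heigν : ∀ j, F ν j = lam' * ν j)
    (hSμ : (⨆ i : Fin m, ∑ j ∈ J i, μ j) = ρbar)
    (hSν : (⨆ i : Fin m, ∑ j ∈ J i, ν j) = ρbar) :
    lam < lam' ∨ (lam ≤ lam' ∧ ∀ j, μ j ≤ ν j) := by
  have : Nonempty (Fin n) := ⟨⟨0, hn⟩⟩
  obtain ⟨js, hjs⟩ := Finite.exists_max (fun j : Fin n => μ j / ν j)
  set r : ℝ := μ js / ν js with hr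
  have hrpos : 0 < r := div_pos (hμp js) (hνp js)
  have hrle : ∀ j, μ j ≤ r * ν j := fun j => (div_le_iff₀ (hνp j)).mp (hjs j)
  have hrjs : μ js = r * ν js := by
    rw [hr]; exact (div_mul_cancel₀ _ (ne_of_gt (hνp js))).symm
  rcases lt_trichotomy r 1 with h1 | h1 | h1
  · exfalso
    refine sif_aux_not_lt hm J ρbar hρ μ ν (fun j => ?_) hSμ hSν
    calc μ j ≤ r * ν j := hrle j
    _ < 1 * ν j := by exact mul_lt_mul_of_pos_right h1 (hνp j)
    _ = ν j := one_mul _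
  · have hμν : ∀ j, μ j ≤ ν j := fun j => by
      have := hrle j; rw [h1, one_mul] at this; exact this
    right
    refine ⟨?_, hμν⟩
    have hmono := hF.2.1 μ ν hμ hμν js
    rw [heigμ, heigν] at hmono
    have heq : μ js = ν js := by rw [hrjs, h1, one_mul]
    rw [← heq] at hmono
    exact le_of_mul_le_mul_right (by linarith [hmono]) (hμp js)
  · left
    have hscale := hF.2.2 r h1 ν hν js
    have hmono := hF.2.1 μ (fun l => r * ν l) hμ hrle js
    rw [heigμ] at hmono
    rw [heigν] at hscale
    have : lam * μ js < r * (lam' * ν js) := lt_of_le_of_lt hmono hscale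
    rw [hrjs] at this
    have hνjs := hνp js
    nlinarith [mul_pos hrpos hνjs]

/-- The eigenvalue of an SIF and its `H`-normalized eigenvector are unique. -/
theorem sif_eigen_unique (n m : ℕ) (hn : 0 < n) (hm : 0 < m)
    (J : Fin m → Finset (Fin n)) (hcover : ∀ j : Fin n, ∃ i : Fin m, j ∈ J i)
    (ρbar : ℝ) (hρ : 0 < ρbar)
    (F : (Fin n → ℝ) → Fin n → ℝ) (hF : IsSIF F)
    (H : (Fin n → ℝ) → ℝ)
    (hH : ∀ μ : Fin n → ℝ, H μ = (1 / ρbar) * ⨆ i : Fin m, ∑ j ∈ J i, μ j)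
    (μ ν : Fin n → ℝ) (hμ : ∀ j, 0 ≤ μ j) (hν : ∀ j, 0 ≤ ν j)
    (lam lam' : ℝ) (hlam : 0 < lam) (hlam' : 0 < lam')
    (heigμ : ∀ j, F μ j = lam * μ j)
    (heigν : ∀ j, F ν j = lam' * ν j)
    (hHμ : H μ = 1) (hHν : H ν = 1) :
    lam = lam' ∧ μ = ν := by
  have hμp : ∀ j, 0 < μ j := fun j => by
    have h := hF.1 μ hμ j; rw [heigμ] at h; nlinarith [hμ j]
  have hνp : ∀ j, 0 < ν j := fun j => by
    have h := hF.1 ν hν j; rw [heigν] at h; nlinarith [hν j]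
  have hSμ : (⨆ i : Fin m, ∑ j ∈ J i, μ j) = ρbar := by
    have := hH μ; rw [hHμ] at this; field_simp at this; linarith
  have hSν : (⨆ i : Fin m, ∑ j ∈ J i, ν j) = ρbar := by
    have := hH ν; rw [hHν] at this; field_simp at this; linarith
  have k1 := sif_aux_key hn hm J ρbar hρ F hF μ ν hμ hν hμp hνp lam lam' hlam hlam' heigμ heigν hSμ hSν
  have k2 := sif_aux_key hn hm J ρbar hρ F hF ν μ hν hμ hνp hμp lam' lam hlam' hlam heigν heigμ hSν hSμ
  rcases k1 with h1 | ⟨h1, h1'⟩ <;> rcases k2 with h2 | ⟨h2, h2'⟩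
  · linarith
  · linarith
  · linarith
  · have hμν : μ = ν := funext fun j => le_antisymm (h1' j) (h2' j)
    refine ⟨?_, hμν⟩
    have j0 : Fin n := ⟨0, hn⟩
    have e1 := heigμ j0
    have e2 := heigν j0
    rw [← hμν] at e2
    rw [e1] at e2
    have := hμp j0
    exact mul_right_cancel₀ (ne_of_gt this) e2
end

section
/- Let F be a standard interference function on the nonnegative orthant of ℝ^n, and suppose λ* > 0 and μ* ≥ 0 satisfy F(μ*) = λ*·μ* and H(μ*) = 1. Then for every μ ≥ 0 with H(μ) ≤ 1 and every λ > 0 such that λ·μ ≥ F(μ) componentwise, one has λ ≥ λ*. -/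
/-- The eigenvalue `λ*` of an SIF (with `H`-normalized eigenvector) is minimal:
any `λ > 0` with `λ·μ ≥ F(μ)` for some `μ ≥ 0` with `H(μ) ≤ 1` satisfies
`λ ≥ λ*`. -/
theorem sif_eigenvalue_minimal (n m : ℕ) (hn : 0 < n) (hm : 0 < m)
    (J : Fin m → Finset (Fin n)) (hcover : ∀ j : Fin n, ∃ i : Fin m, j ∈ J i)
    (ρbar : ℝ) (hρ : 0 < ρbar)
    (F : (Fin n → ℝ) → Fin n → ℝ) (hF : IsSIF F)
    (H : (Fin n → ℝ) → ℝ)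
    (hH : ∀ μ : Fin n → ℝ, H μ = (1 / ρbar) * ⨆ i : Fin m, ∑ j ∈ J i, μ j)
    (lamstar : ℝ) (hlamstar : 0 < lamstar)
    (μstar : Fin n → ℝ) (hμstar : ∀ j, 0 ≤ μstar j)
    (heig : ∀ j, F μstar j = lamstar * μstar j)
    (hHμstar : H μstar = 1) :
    ∀ (μ : Fin n → ℝ), (∀ j, 0 ≤ μ j) → H μ ≤ 1 →
      ∀ lam : ℝ, 0 < lam → (∀ j, F μ j ≤ lam * μ j) → lamstar ≤ lam := by

  intro μ hμ hHμ lam hlam hdom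
  obtain ⟨hpos, hmono, hscal⟩ := hF
  haveI : NeZero n := ⟨hn.ne'⟩
  haveI : NeZero m := ⟨hm.ne'⟩
  -- μ and μstar are strictly positive
  have hμpos : ∀ j, 0 < μ j := by
    intro j
    have h1 : 0 < F μ j := hpos μ hμ j
    have h2 := hdom j
    nlinarith
  have hμspos : ∀ j, 0 < μstar j := by
    intro j
    have h1 : 0 < F μstar j := hpos μstar hμstar j
    rw [heig j] at h1
    nlinarith
  -- pick j0 maximizing μstar j / μ j
  obtain ⟨j0, -, hj0⟩ := Finset.exists_max_image (Finset.univ : Finset (Fin n))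
      (fun j => μstar j / μ j) ⟨⟨0, hn⟩, Finset.mem_univ _⟩
  set β : ℝ := μstar j0 / μ j0 with hβdef
  have hβpos : 0 < β := div_pos (hμspos j0) (hμpos j0)
  have hle : ∀ j, μstar j ≤ β * μ j := by
    intro j
    have h := hj0 j (Finset.mem_univ j)
    rw [div_le_div_iff₀ (hμpos j) (hμpos j0)] at h
    rw [hβdef, div_mul_eq_mul_div, le_div_iff₀ (hμpos j0)]
    linarith
  have hβμj0 : β * μ j0 = μstar j0 := by
    rw [hβdef, div_mul_cancel₀ _ (hμpos j0).ne']
  -- β ≥ 1 using H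
  have hbdd : BddAbove (Set.range fun i : Fin m => ∑ j ∈ J i, μ j) :=
    (Set.finite_range _).bddAbove
  have hβ1 : 1 ≤ β := by
    have hsup : (⨆ i : Fin m, ∑ j ∈ J i, μstar j) ≤
        β * ⨆ i : Fin m, ∑ j ∈ J i, μ j := by
      apply ciSup_le
      intro i
      calc ∑ j ∈ J i, μstar j ≤ ∑ j ∈ J i, β * μ j :=
            Finset.sum_le_sum fun j _ => hle j
        _ = β * ∑ j ∈ J i, μ j := by rw [Finset.mul_sum]
        _ ≤ β * ⨆ i : Fin m, ∑ j ∈ J i, μ j :=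
            mul_le_mul_of_nonneg_left (le_ciSup hbdd i) hβpos.le
    have h1 : 1 / ρbar * (⨆ i : Fin m, ∑ j ∈ J i, μstar j) = 1 := by
      rw [← hH]; exact hHμstar
    have h2 : 1 / ρbar * (⨆ i : Fin m, ∑ j ∈ J i, μ j) ≤ 1 := by
      rw [← hH]; exact hHμ
    have hρ' : (0:ℝ) < 1 / ρbar := by positivity
    calc (1:ℝ) = 1 / ρbar * (⨆ i : Fin m, ∑ j ∈ J i, μstar j) := h1.symm
      _ ≤ 1 / ρbar * (β * ⨆ i : Fin m, ∑ j ∈ J i, μ j) :=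
          mul_le_mul_of_nonneg_left hsup hρ'.le
      _ = β * (1 / ρbar * ⨆ i : Fin m, ∑ j ∈ J i, μ j) := by ring
      _ ≤ β * 1 := mul_le_mul_of_nonneg_left h2 hβpos.le
      _ = β := mul_one β
  -- key inequality at j0
  have hkey : lamstar * μstar j0 ≤ lam * μstar j0 := by
    rcases eq_or_lt_of_le hβ1 with hβeq | hβgt
    · have hle' : ∀ j, μstar j ≤ μ j := by
        intro j; have := hle j; rw [← hβeq] at this; linarith
      calc lamstar * μstar j0 = F μstar j0 := (heig j0).symm
        _ ≤ F μ j0 := hmono μstar μ hμstar hle' j0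
        _ ≤ lam * μ j0 := hdom j0
        _ = lam * μstar j0 := by rw [← hβμj0, ← hβeq]; ring
    · calc lamstar * μstar j0 = F μstar j0 := (heig j0).symm
        _ ≤ F (fun l => β * μ l) j0 := hmono μstar _ hμstar hle j0
        _ ≤ β * F μ j0 := (hscal β hβgt μ hμ j0).le
        _ ≤ β * (lam * μ j0) := mul_le_mul_of_nonneg_left (hdom j0) hβpos.le
        _ = lam * μstar j0 := by rw [← hβμj0]; ring
  have := hμspos j0
  nlinarith
end

section
/- Fix real numbers φ_1,…,φ_n > 0 and a set S ⊆ {1,…,n}, and define, for α > 0, P(α) = ρ̄ / ( max_{1≤i≤m} Σ_{j∈J_i} φ_j / π_j(α) ), where π_j(α) = 1 if j ∈ S and π_j(α) = α otherwise. Then P is positive, nondecreasing and concave on (0, ∞); in particular, η·P(α) ≥ P(η·α) for every η > 1 and every α > 0. -/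
lemma pos_lin (A B a : ℝ) (hA : 0 ≤ A) (hB : 0 ≤ B) (hAB : 0 < A + B) (ha : 0 < a) :
    0 < A * a + B := by
  rcases eq_or_lt_of_le hB with h | h
  · have hA' : 0 < A := by linarith
    nlinarith
  · nlinarith [mul_nonneg hA ha.le]

lemma key_concave (A B a b t : ℝ) (hA : 0 ≤ A) (hB : 0 ≤ B) (hAB : 0 < A + B)
    (ha : 0 < a) (hb : 0 < b) (ht : 0 ≤ t) (ht1 : t ≤ 1) :
    t * (a / (A * a + B)) + (1 - t) * (b / (A * b + B)) ≤
      (t * a + (1 - t) * b) / (A * (t * a + (1 - t) * b) + B) := by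
  have hc : 0 < t * a + (1 - t) * b := by
    rcases eq_or_lt_of_le ht with h | h
    · simp [← h]; linarith
    · nlinarith
  have hd1 := pos_lin A B a hA hB hAB ha
  have hd2 := pos_lin A B b hA hB hAB hb
  have hd3 := pos_lin A B _ hA hB hAB hc
  rw [mul_div_assoc', mul_div_assoc',
    div_add_div _ _ (ne_of_gt hd1) (ne_of_gt hd2), div_le_div_iff₀ (by positivity) hd3]
  nlinarith [mul_nonneg (mul_nonneg (mul_nonneg (mul_nonneg ht (by linarith : (0:ℝ) ≤ 1 - t)) hA) hB) (sq_nonneg (a - b))]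

/-- For fixed positive `φ_j` and a scaling set `S`, the function
`P(α) = ρ̄ / max_i Σ_{j∈J_i} φ_j/π_j(α)` is positive, nondecreasing and
concave on `(0,∞)`; in particular `P(η·α) ≤ η·P(α)` for `η > 1`. -/
theorem P_pos_mono_concave (n m : ℕ) (hn : 0 < n) (hm : 0 < m)
    (J : Fin m → Finset (Fin n)) (hcover : ∀ j : Fin n, ∃ i : Fin m, j ∈ J i)
    (ρbar : ℝ) (hρ : 0 < ρbar)
    (φ : Fin n → ℝ) (hφ : ∀ j, 0 < φ j)
    (S : Finset (Fin n))
    (P : ℝ → ℝ)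
    (hP : ∀ a : ℝ, P a =
      ρbar / (⨆ i : Fin m, ∑ j ∈ J i, φ j / (if j ∈ S then (1 : ℝ) else a))) :
    (∀ a : ℝ, 0 < a → 0 < P a) ∧
    (∀ a a' : ℝ, 0 < a → a ≤ a' → P a ≤ P a') ∧
    ConcaveOn ℝ (Set.Ioi (0 : ℝ)) P ∧
    (∀ η : ℝ, 1 < η → ∀ a : ℝ, 0 < a → P (η * a) ≤ η * P a) := by
  haveI : Nonempty (Fin m) := ⟨⟨0, hm⟩⟩
  set g : ℝ → Fin m → ℝ :=
    fun a i => ∑ j ∈ J i, φ j / (if j ∈ S then (1 : ℝ) else a) with hg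
  set A : Fin m → ℝ := fun i => ∑ j ∈ (J i).filter (· ∈ S), φ j with hAdef
  set B : Fin m → ℝ := fun i => ∑ j ∈ (J i).filter (· ∉ S), φ j with hBdef
  have hA : ∀ i, 0 ≤ A i := fun i => Finset.sum_nonneg fun j _ => (hφ j).le
  have hB : ∀ i, 0 ≤ B i := fun i => Finset.sum_nonneg fun j _ => (hφ j).le
  have hgAB : ∀ (a : ℝ) (i : Fin m), g a i = A i + B i / a := by
    intro a i
    have : g a i = ∑ j ∈ J i, (if j ∈ S then φ j else φ j / a) := by
      apply Finset.sum_congr rfl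
      intro j _
      by_cases h : j ∈ S <;> simp [h]
    rw [this, Finset.sum_ite, ← Finset.sum_div]
  have hbdd : ∀ a : ℝ, BddAbove (Set.range (g a)) :=
    fun a => Set.Finite.bddAbove (Set.finite_range _)
  have hMge : ∀ (a : ℝ) (i : Fin m), g a i ≤ ⨆ k, g a k :=
    fun a i => le_ciSup (hbdd a) i
  have hMmax : ∀ a : ℝ, ∃ i, (⨆ k, g a k) = g a i := by
    intro a
    obtain ⟨i, hi⟩ := Finite.exists_max (g a)
    exact ⟨i, le_antisymm (ciSup_le hi) (hMge a i)⟩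
  have hgpos : ∀ a : ℝ, 0 < a → ∀ i j, j ∈ J i → 0 < g a i := by
    intro a ha i j hj
    have h1 : 0 < φ j / (if j ∈ S then (1 : ℝ) else a) := by
      by_cases h : j ∈ S
      · simpa [h] using hφ j
      · simpa [h] using div_pos (hφ j) ha
    refine lt_of_lt_of_le h1 (Finset.single_le_sum
      (f := fun k => φ k / (if k ∈ S then (1:ℝ) else a)) (fun k _ => ?_) hj)
    by_cases h : k ∈ S
    · simpa [h] using (hφ k).le
    · simpa [h] using (div_pos (hφ k) ha).le
  have hMpos : ∀ a : ℝ, 0 < a → 0 < ⨆ k, g a k := by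
    intro a ha
    obtain ⟨i, hi⟩ := hcover ⟨0, hn⟩
    exact lt_of_lt_of_le (hgpos a ha i _ hi) (hMge a i)
  -- A i + B i > 0 whenever g a i > 0 for some a > 0
  have hABpos : ∀ (a : ℝ), 0 < a → ∀ i, 0 < g a i → 0 < A i + B i := by
    intro a ha i hgi
    rw [hgAB] at hgi
    by_contra h
    push_neg at h
    have hA0 : A i = 0 := le_antisymm (by linarith [hB i]) (hA i)
    have hB0 : B i = 0 := le_antisymm (by linarith [hA i]) (hB i)
    rw [hA0, hB0] at hgi
    simp at hgi
  -- rewrite ρbar / (A + B/d) as ρbar * (d / (A*d + B))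
  have hrw : ∀ (i : Fin m) (d : ℝ), 0 < d → 0 < A i + B i →
      ρbar / (A i + B i / d) = ρbar * (d / (A i * d + B i)) := by
    intro i d hd hABi
    have h1 : A i + B i / d = (A i * d + B i) / d := by
      field_simp
    rw [h1, div_div_eq_mul_div, mul_div_assoc]
  -- g a i > 0 for all a>0 when A i + B i > 0
  have hgpos' : ∀ (i : Fin m), 0 < A i + B i → ∀ a : ℝ, 0 < a → 0 < g a i := by
    intro i hABi a ha
    rw [hgAB]
    have : A i + B i / a = (A i * a + B i) / a := by field_simp
    rw [this]
    exact div_pos (pos_lin _ _ _ (hA i) (hB i) hABi ha) ha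
  -- P a ≤ ρbar * (a / (A i * a + B i)) for any i with A i + B i > 0
  have hPle : ∀ (i : Fin m), 0 < A i + B i → ∀ a : ℝ, 0 < a →
      P a ≤ ρbar * (a / (A i * a + B i)) := by
    intro i hABi a ha
    rw [hP a, ← hrw i a ha hABi, ← hgAB]
    exact div_le_div_of_nonneg_left hρ.le (hgpos' i hABi a ha) (hMge a i)
  -- P a = ρbar * (a / (A i * a + B i)) for i attaining the max at a
  have hPeq : ∀ a : ℝ, 0 < a → ∀ i, (⨆ k, g a k) = g a i →
      0 < A i + B i ∧ P a = ρbar * (a / (A i * a + B i)) := by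
    intro a ha i hi
    have hgi : 0 < g a i := hi ▸ hMpos a ha
    have hABi := hABpos a ha i hgi
    refine ⟨hABi, ?_⟩
    rw [hP a, hi, hgAB, hrw i a ha hABi]
  have hpos : ∀ a : ℝ, 0 < a → 0 < P a := by
    intro a ha
    rw [hP a]
    exact div_pos hρ (hMpos a ha)
  refine ⟨hpos, ?_, ?_, ?_⟩
  · -- monotone
    intro a a' ha haa'
    have ha' : 0 < a' := lt_of_lt_of_le ha haa'
    obtain ⟨i, hi⟩ := hMmax a'
    have hle : (⨆ k, g a' k) ≤ ⨆ k, g a k := by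
      rw [hi]
      refine le_trans (Finset.sum_le_sum fun j _ => ?_) (hMge a i)
      by_cases h : j ∈ S
      · simp [h]
      · simp only [h, if_false]
        exact div_le_div_of_nonneg_left (hφ j).le ha haa'
    rw [hP a, hP a']
    exact div_le_div_of_nonneg_left hρ.le (hMpos a' ha') hle
  · -- concave
    refine ⟨convex_Ioi 0, ?_⟩
    intro x hx y hy t s ht hs hts
    simp only [smul_eq_mul]
    have hx' : (0:ℝ) < x := hx
    have hy' : (0:ℝ) < y := hy
    have hs' : s = 1 - t := by linarith
    have hc : 0 < t * x + s * y := by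
      rcases eq_or_lt_of_le ht with h | h
      · rw [← h] at hts ⊢; simp; nlinarith
      · nlinarith
    obtain ⟨i, hi⟩ := hMmax (t * x + s * y)
    obtain ⟨hABi, hPc⟩ := hPeq _ hc i hi
    calc t * P x + s * P y
        ≤ t * (ρbar * (x / (A i * x + B i))) + s * (ρbar * (y / (A i * y + B i))) :=
          add_le_add (mul_le_mul_of_nonneg_left (hPle i hABi x hx') ht)
            (mul_le_mul_of_nonneg_left (hPle i hABi y hy') hs)
      _ = ρbar * (t * (x / (A i * x + B i)) + (1 - t) * (y / (A i * y + B i))) := by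
          rw [hs']; ring
      _ ≤ ρbar * ((t * x + (1 - t) * y) / (A i * (t * x + (1 - t) * y) + B i)) := by
          gcongr _ * ?_
          exact key_concave (A i) (B i) x y t (hA i) (hB i) hABi hx' hy' ht (by linarith)
      _ = P (t * x + s * y) := by rw [hPc, hs']
  · -- scaling
    intro η hη a ha
    have hηa : 0 < η * a := by positivity
    obtain ⟨i, hi⟩ := hMmax a
    obtain ⟨hABi, hPa⟩ := hPeq a ha i hi
    have h1 : P (η * a) ≤ ρbar * (η * a / (A i * (η * a) + B i)) :=
      hPle i hABi (η * a) hηa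
    refine h1.trans ?_
    rw [hPa]
    have hd1 := pos_lin (A i) (B i) a (hA i) (hB i) hABi ha
    have hd2 := pos_lin (A i) (B i) (η * a) (hA i) (hB i) hABi hηa
    have h2 : η * (ρbar * (a / (A i * a + B i))) = ρbar * (η * a / (A i * a + B i)) := by
      ring
    rw [h2]
    refine mul_le_mul_of_nonneg_left ?_ hρ.le
    refine div_le_div_of_nonneg_left hηa.le hd1 ?_
    nlinarith [mul_nonneg (hA i) ha.le]
end

section
/- Let f be a standard interference function on the nonnegative orthant of ℝ^n and let S ⊆ {1,…,n}. Let 0 < α ≤ α', and suppose there are λ_α > 0, μ_α ≥ 0 with F_α(μ_α) = λ_α·μ_α and H(μ_α) = 1, and λ_{α'} > 0, μ_{α'} ≥ 0 with F_{α'}(μ_{α'}) = λ_{α'}·μ_{α'} and H(μ_{α'}) = 1. Then λ_{α'} ≤ λ_α; equivalently, T(α') ≥ T(α) where T(α) = 1/λ_α, so T is monotonically nondecreasing. -/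
/-- Monotonicity of the eigenvalue in `α`: if `0 < α ≤ α'`, then the
eigenvalue of `F_{α'}` is at most that of `F_α`
(equivalently, `T(α) = 1/λ_α` is nondecreasing). -/
theorem eigenvalue_antitone_in_alpha (n m : ℕ) (hn : 0 < n) (hm : 0 < m)
    (J : Fin m → Finset (Fin n)) (hcover : ∀ j : Fin n, ∃ i : Fin m, j ∈ J i)
    (ρbar : ℝ) (hρ : 0 < ρbar)
    (S : Finset (Fin n))
    (f : (Fin n → ℝ) → Fin n → ℝ) (hf : IsSIF f)
    (H : (Fin n → ℝ) → ℝ)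
    (hH : ∀ μ : Fin n → ℝ, H μ = (1 / ρbar) * ⨆ i : Fin m, ∑ j ∈ J i, μ j)
    (Fa : ℝ → (Fin n → ℝ) → Fin n → ℝ)
    (hFa : ∀ (a : ℝ) (μ : Fin n → ℝ) (j : Fin n),
      Fa a μ j = f μ j / (if j ∈ S then (1 : ℝ) else a))
    (α α' : ℝ) (hα : 0 < α) (hαα' : α ≤ α')
    (lamα : ℝ) (hlamα : 0 < lamα)
    (μα : Fin n → ℝ) (hμα : ∀ j, 0 ≤ μα j)
    (heigα : ∀ j, Fa α μα j = lamα * μα j) (hHα : H μα = 1)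
    (lamα' : ℝ) (hlamα' : 0 < lamα')
    (μα' : Fin n → ℝ) (hμα' : ∀ j, 0 ≤ μα' j)
    (heigα' : ∀ j, Fa α' μα' j = lamα' * μα' j) (hHα' : H μα' = 1) :
    lamα' ≤ lamα := by
  obtain ⟨hpos, hmono, hscale⟩ := hf
  have hα' : 0 < α' := lt_of_lt_of_le hα hαα'
  have hπpos : ∀ (j : Fin n) (a : ℝ), 0 < a →
      (0 : ℝ) < (if j ∈ S then (1 : ℝ) else a) := by
    intro j a ha; by_cases h : j ∈ S <;> simp [h]; exact ha
  -- positivity of the eigenvectors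
  have hμαpos : ∀ j, 0 < μα j := by
    intro j
    have h1 : 0 < f μα j / (if j ∈ S then (1 : ℝ) else α) :=
      div_pos (hpos μα hμα j) (hπpos j α hα)
    have h2 := heigα j; rw [hFa] at h2
    nlinarith [h1, h2, hlamα, hμα j]
  have hμα'pos : ∀ j, 0 < μα' j := by
    intro j
    have h1 : 0 < f μα' j / (if j ∈ S then (1 : ℝ) else α') :=
      div_pos (hpos μα' hμα' j) (hπpos j α' hα')
    have h2 := heigα' j; rw [hFa] at h2
    nlinarith [h1, h2, hlamα', hμα' j]
  -- choose the index maximizing the ratio μα' j / μα j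
  haveI : Nonempty (Fin n) := ⟨⟨0, hn⟩⟩
  obtain ⟨j₀, hj₀⟩ := Finite.exists_max (fun j => μα' j / μα j)
  set c : ℝ := μα' j₀ / μα j₀ with hc
  have hcpos : 0 < c := div_pos (hμα'pos j₀) (hμαpos j₀)
  have hle : ∀ j, μα' j ≤ c * μα j := by
    intro j
    have := hj₀ j
    rw [div_le_iff₀ (hμαpos j)] at this
    linarith [this]
  have hcj₀ : μα' j₀ = c * μα j₀ := by
    rw [hc, div_mul_cancel₀ _ (hμαpos j₀).ne']
  -- c ≥ 1 via the normalization H = 1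
  have hc1 : 1 ≤ c := by
    by_contra h
    push_neg at h
    have hbdd : BddAbove (Set.range fun i : Fin m => ∑ j ∈ J i, μα j) :=
      Set.Finite.bddAbove (Set.finite_range _)
    haveI : Nonempty (Fin m) := ⟨⟨0, hm⟩⟩
    have hsup : (⨆ i : Fin m, ∑ j ∈ J i, μα' j) ≤
        c * ⨆ i : Fin m, ∑ j ∈ J i, μα j := by
      apply ciSup_le
      intro i
      have h1 : ∑ j ∈ J i, μα' j ≤ c * ∑ j ∈ J i, μα j := by
        rw [Finset.mul_sum]
        exact Finset.sum_le_sum fun j _ => hle j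
      have h2 : (∑ j ∈ J i, μα j) ≤ ⨆ i : Fin m, ∑ j ∈ J i, μα j :=
        le_ciSup hbdd i
      calc ∑ j ∈ J i, μα' j ≤ c * ∑ j ∈ J i, μα j := h1
        _ ≤ c * ⨆ i : Fin m, ∑ j ∈ J i, μα j :=
          mul_le_mul_of_nonneg_left h2 hcpos.le
    have hHle : H μα' ≤ c * H μα := by
      rw [hH, hH]
      calc (1 / ρbar) * ⨆ i : Fin m, ∑ j ∈ J i, μα' j
          ≤ (1 / ρbar) * (c * ⨆ i : Fin m, ∑ j ∈ J i, μα j) :=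
            mul_le_mul_of_nonneg_left hsup (by positivity)
        _ = c * ((1 / ρbar) * ⨆ i : Fin m, ∑ j ∈ J i, μα j) := by ring
    rw [hHα, hHα'] at hHle
    linarith
  -- key chain of inequalities at j₀
  have hfle : f μα' j₀ / (if j₀ ∈ S then (1 : ℝ) else α') ≤
      f μα' j₀ / (if j₀ ∈ S then (1 : ℝ) else α) := by
    apply div_le_div_of_nonneg_left (hpos μα' hμα' j₀).le (hπpos j₀ α hα)
    by_cases h : j₀ ∈ S <;> simp [h, hαα']
  have hkey : lamα' * μα' j₀ ≤ lamα * μα' j₀ := by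
    have e' := heigα' j₀; rw [hFa] at e'
    have e := heigα j₀; rw [hFa] at e
    rcases eq_or_lt_of_le hc1 with hc1' | hc1'
    · -- c = 1
      have hμeq : μα' j₀ = μα j₀ := by rw [hcj₀, ← hc1']; ring
      have hmle : ∀ j, μα' j ≤ μα j := by
        intro j; have := hle j; rw [← hc1'] at this; linarith
      have h3 : f μα' j₀ ≤ f μα j₀ := hmono μα' μα hμα' hmle j₀
      calc lamα' * μα' j₀ = f μα' j₀ / (if j₀ ∈ S then (1 : ℝ) else α') := e'.symm
        _ ≤ f μα' j₀ / (if j₀ ∈ S then (1 : ℝ) else α) := hfle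
        _ ≤ f μα j₀ / (if j₀ ∈ S then (1 : ℝ) else α) :=
            (div_le_div_iff_of_pos_right (hπpos j₀ α hα)).mpr h3
        _ = lamα * μα j₀ := e
        _ = lamα * μα' j₀ := by rw [hμeq]
    · -- c > 1
      have h3 : f μα' j₀ ≤ f (fun l => c * μα l) j₀ :=
        hmono μα' (fun l => c * μα l) hμα' hle j₀
      have h5 : f (fun l => c * μα l) j₀ < c * f μα j₀ :=
        hscale c hc1' μα hμα j₀
      calc lamα' * μα' j₀ = f μα' j₀ / (if j₀ ∈ S then (1 : ℝ) else α') := e'.symm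
        _ ≤ f μα' j₀ / (if j₀ ∈ S then (1 : ℝ) else α) := hfle
        _ ≤ (c * f μα j₀) / (if j₀ ∈ S then (1 : ℝ) else α) :=
            (div_le_div_iff_of_pos_right (hπpos j₀ α hα)).mpr (le_of_lt (lt_of_le_of_lt h3 h5))
        _ = c * (f μα j₀ / (if j₀ ∈ S then (1 : ℝ) else α)) := by ring
        _ = c * (lamα * μα j₀) := by rw [e]
        _ = lamα * μα' j₀ := by rw [hcj₀]; ring
  have := hμα'pos j₀
  nlinarith [hkey, hμα'pos j₀]
end

section
/- Let f be a standard interference function on the nonnegative orthant of ℝ^n that is additionally strictly monotone, and let S ⊆ {1,…,n} be nonempty. Let α > 0 and η > 1, and suppose there are λ_α > 0, μ_α ≥ 0 with F_α(μ_α) = λ_α·μ_α and H(μ_α) = 1, and λ_{ηα} > 0, μ_{ηα} ≥ 0 with F_{ηα}(μ_{ηα}) = λ_{ηα}·μ_{ηα} and H(μ_{ηα}) = 1. Then λ_{ηα} > λ_α/η; equivalently, T(η·α) < η·T(α) where T(α) = 1/λ_α, so T is scalable. -/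
/-- Scalability of `T(α) = 1/λ_α`: for `η > 1` the eigenvalue of `F_{ηα}`
satisfies `λ_{ηα} > λ_α/η`, i.e. `T(η·α) < η·T(α)`. -/
theorem eigenvalue_scalable_in_alpha (n m : ℕ) (hn : 0 < n) (hm : 0 < m)
    (J : Fin m → Finset (Fin n)) (hcover : ∀ j : Fin n, ∃ i : Fin m, j ∈ J i)
    (ρbar : ℝ) (hρ : 0 < ρbar)
    (S : Finset (Fin n)) (hS : S.Nonempty)
    (f : (Fin n → ℝ) → Fin n → ℝ) (hf : IsSIF f)
    (hstrict : ∀ μ μ' : Fin n → ℝ, (∀ j, 0 ≤ μ j) → (∀ j, μ j ≤ μ' j) →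
      μ ≠ μ' → ∀ j, f μ j < f μ' j)
    (H : (Fin n → ℝ) → ℝ)
    (hH : ∀ μ : Fin n → ℝ, H μ = (1 / ρbar) * ⨆ i : Fin m, ∑ j ∈ J i, μ j)
    (Fa : ℝ → (Fin n → ℝ) → Fin n → ℝ)
    (hFa : ∀ (a : ℝ) (μ : Fin n → ℝ) (j : Fin n),
      Fa a μ j = f μ j / (if j ∈ S then (1 : ℝ) else a))
    (α η : ℝ) (hα : 0 < α) (hη : 1 < η)
    (lamα : ℝ) (hlamα : 0 < lamα)
    (μα : Fin n → ℝ) (hμα : ∀ j, 0 ≤ μα j)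
    (heigα : ∀ j, Fa α μα j = lamα * μα j) (hHα : H μα = 1)
    (lamηα : ℝ) (hlamηα : 0 < lamηα)
    (μηα : Fin n → ℝ) (hμηα : ∀ j, 0 ≤ μηα j)
    (heigηα : ∀ j, Fa (η * α) μηα j = lamηα * μηα j) (hHηα : H μηα = 1) :
    lamα / η < lamηα := by

  classical
  obtain ⟨hpos, hmono, hscal⟩ := hf
  -- positivity of the scaling factors
  have hπα : ∀ j : Fin n, (0:ℝ) < (if j ∈ S then (1:ℝ) else α) := by
    intro j; split <;> [norm_num; exact hα]
  have hηα0 : (0:ℝ) < η * α := by positivity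
  have hπηα : ∀ j : Fin n, (0:ℝ) < (if j ∈ S then (1:ℝ) else η * α) := by
    intro j; split <;> [norm_num; exact hηα0]
  -- eigen-equations for f
  have hfα : ∀ j, f μα j = (if j ∈ S then (1:ℝ) else α) * (lamα * μα j) := by
    intro j
    have h := heigα j
    rw [hFa] at h
    rw [div_eq_iff (hπα j).ne'] at h
    rw [h]; ring
  have hfη : ∀ j, f μηα j = (if j ∈ S then (1:ℝ) else η * α) * (lamηα * μηα j) := by
    intro j
    have h := heigηα j
    rw [hFa] at h
    rw [div_eq_iff (hπηα j).ne'] at h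
    rw [h]; ring
  -- strict positivity of the eigenvectors
  have hμαpos : ∀ j, 0 < μα j := by
    intro j
    have h := hpos μα hμα j
    rw [hfα j] at h
    nlinarith [hπα j, mul_pos (hπα j) hlamα]
  have hμηαpos : ∀ j, 0 < μηα j := by
    intro j
    have h := hpos μηα hμηα j
    rw [hfη j] at h
    nlinarith [hπηα j, mul_pos (hπηα j) hlamηα]
  -- trivial case: the two eigenvectors coincide
  by_cases heq : μα = μηα
  · obtain ⟨j, hjS⟩ := hS
    have h1 := hfα j
    have h2 := hfη j
    rw [heq] at h1
    rw [if_pos hjS] at h1 h2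
    have hll : lamα = lamηα := by
      have h3 : lamα * μηα j = lamηα * μηα j := by linarith
      exact mul_right_cancel₀ (hμηαpos j).ne' h3
    rw [hll]
    exact div_lt_self hlamηα hη
  -- the maximal ratio
  obtain ⟨j0, -, hj0⟩ := Finset.exists_max_image Finset.univ
    (fun j => μα j / μηα j) ⟨⟨0, hn⟩, Finset.mem_univ _⟩
  set c : ℝ := μα j0 / μηα j0 with hc
  have hcpos : 0 < c := div_pos (hμαpos j0) (hμηαpos j0)
  have hle : ∀ j, μα j ≤ c * μηα j := by
    intro j
    have := hj0 j (Finset.mem_univ j)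
    exact (div_le_iff₀ (hμηαpos j)).mp this
  have hμeq : μα j0 = c * μηα j0 := by
    rw [hc]
    exact (div_mul_cancel₀ (μα j0) (hμηαpos j0).ne').symm
  -- c ≥ 1 from the normalization H = 1
  have hsupα : (⨆ i : Fin m, ∑ j ∈ J i, μα j) = ρbar := by
    have h := hHα
    rw [hH] at h
    field_simp at h
    linarith
  have hsupη : (⨆ i : Fin m, ∑ j ∈ J i, μηα j) = ρbar := by
    have h := hHηα
    rw [hH] at h
    field_simp at h
    linarith
  haveI : Nonempty (Fin m) := ⟨⟨0, hm⟩⟩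
  have hc1 : 1 ≤ c := by
    have hbdd : BddAbove (Set.range fun i : Fin m => ∑ j ∈ J i, μηα j) :=
      Set.Finite.bddAbove (Set.finite_range _)
    have hsle : (⨆ i : Fin m, ∑ j ∈ J i, μα j) ≤
        c * ⨆ i : Fin m, ∑ j ∈ J i, μηα j := by
      apply ciSup_le
      intro i
      calc ∑ j ∈ J i, μα j ≤ ∑ j ∈ J i, c * μηα j :=
            Finset.sum_le_sum fun j _ => hle j
        _ = c * ∑ j ∈ J i, μηα j := by rw [Finset.mul_sum]
        _ ≤ c * ⨆ i : Fin m, ∑ j ∈ J i, μηα j :=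
            mul_le_mul_of_nonneg_left (le_ciSup hbdd i) hcpos.le
    rw [hsupα, hsupη] at hsle
    nlinarith
  -- key strict inequality f μα j0 < c * f μηα j0
  have hkey : f μα j0 < c * f μηα j0 := by
    rcases lt_or_eq_of_le hc1 with hgt | heq1
    · calc f μα j0 ≤ f (fun l => c * μηα l) j0 :=
            hmono μα _ hμα (fun j => hle j) j0
        _ < c * f μηα j0 := hscal c hgt μηα hμηα j0
    · have hle' : ∀ j, μα j ≤ μηα j := by
        intro j; have := hle j; rw [← heq1] at this; linarith
      have := hstrict μα μηα hμα hle' heq j0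
      have hfpos := hpos μηα hμηα j0
      rw [← heq1]; linarith
  rw [hfα j0, hfη j0] at hkey
  by_cases hjS : j0 ∈ S
  · rw [if_pos hjS, if_pos hjS] at hkey
    rw [hμeq] at hkey
    have h1 : lamα < lamηα := by nlinarith [mul_pos hcpos (hμηαpos j0)]
    calc lamα / η < lamα := div_lt_self hlamα hη
      _ < lamηα := h1
  · rw [if_neg hjS, if_neg hjS] at hkey
    rw [hμeq] at hkey
    rw [div_lt_iff₀ (by linarith : (0:ℝ) < η)]
    nlinarith [mul_pos hα (mul_pos hcpos (hμηαpos j0)), mul_pos hcpos (hμηαpos j0)]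
end
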